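/- Let x* ∈ ℝᵖ, z₁,…,zₙ ∈ ℝᵖ, let Hᵢ = ∇²fᵢ(x*) for μ-strongly convex, L̃-Hessian-Lipschitz functions fᵢ with common minimizer structure ∑∇fᵢ(x*) = 0, and B₁,…,Bₙ symmetric matrices with B := (1/n)∑Bᵢ invertible, Γ := ‖B⁻¹‖. Define x := B⁻¹((1/n)∑Bᵢzᵢ − (1/n)∑∇fᵢ(zᵢ)). Then ‖x − x*‖ ≤ (L̃Γ/n)∑ᵢ‖zᵢ − x*‖² + (Γ/n)∑ᵢ‖(Bᵢ − Hᵢ)(zᵢ − x*)‖. -/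

import Mathlib

/-!
Subtracting `x* = B⁻¹ (B x*)` and using `∑ ∇fᵢ(x*) = 0`, the error is
`x − x* = B⁻¹ · (1/n) ∑ᵢ [Bᵢ(zᵢ − x*) − (∇fᵢ(zᵢ) − ∇fᵢ(x*))]`. Inserting `Hᵢ(zᵢ − x*)` splits each
summand into the quasi-Newton error `(Bᵢ − Hᵢ)(zᵢ − x*)` and the first-order Taylor remainder of
`∇fᵢ` at `x*`, which the Lipschitz continuity of the Hessian bounds by `L̃ ‖zᵢ − x*‖²`.
-/

open scoped RealInnerProductSpace

section Taylor

variable {E F : Type*} [NormedAddCommGroup E] [NormedSpace ℝ E]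
  [NormedAddCommGroup F] [NormedSpace ℝ F]

theorem norm_sub_sub_fderiv_le_of_norm_fderiv_sub_le {g : E → F} (hg : Differentiable ℝ g)
    {L : ℝ} (hL : 0 ≤ L) (a b : E) (hLip : ∀ w, ‖fderiv ℝ g w - fderiv ℝ g a‖ ≤ L * ‖w - a‖) :
    ‖g b - g a - fderiv ℝ g a (b - a)‖ ≤ L * ‖b - a‖ ^ 2 := by
  calc ‖g b - g a - fderiv ℝ g a (b - a)‖ ≤ L * ‖b - a‖ * ‖b - a‖ :=
        (convex_segment a b).norm_image_sub_le_of_norm_fderiv_le'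
          (fun w _ => hg w) (fun w hw => (hLip w).trans (by gcongr; exact norm_sub_le_of_mem_segment hw))
          (left_mem_segment ℝ a b) (right_mem_segment ℝ a b)
    _ = L * ‖b - a‖ ^ 2 := by ring

end Taylor

theorem ContDiff.differentiable_gradient {E : Type*} [NormedAddCommGroup E]
    [InnerProductSpace ℝ E] [CompleteSpace E] {f : E → ℝ} (hf : ContDiff ℝ 2 f) :
    Differentiable ℝ (gradient f) :=
  (InnerProductSpace.toDual ℝ E).symm.toContinuousLinearEquiv.differentiable.comp
    ((hf.fderiv_right (by norm_num)).differentiable one_ne_zero)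

section DAveQN

variable {ι E : Type*} [Fintype ι] [NormedAddCommGroup E] [NormedSpace ℝ E]

/-- The paper's master iterate is `daveQNStep (1/n) B (∇ fᵢ) z`. -/
noncomputable def daveQNStep (c : ℝ) (B : ι → E →L[ℝ] E) (g : ι → E → E) (z : ι → E) : E :=
  Ring.inverse (c • ∑ i, B i) (c • ∑ i, B i (z i) - c • ∑ i, g i (z i))

variable {c : ℝ} {B : ι → E →L[ℝ] E} {g : ι → E → E} {z : ι → E} {xstar : E}

theorem daveQNStep_sub (hB : IsUnit (c • ∑ i, B i)) (hopt : c • ∑ i, g i xstar = 0) :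
    daveQNStep c B g z - xstar =
      Ring.inverse (c • ∑ i, B i) (c • ∑ i, (B i (z i - xstar) - (g i (z i) - g i xstar))) := by
  have hxstar : Ring.inverse (c • ∑ i, B i) ((c • ∑ i, B i) xstar) = xstar := by
    simpa using congr($(Ring.inverse_mul_cancel _ hB) xstar)
  conv_lhs => rw [← hxstar]
  rw [daveQNStep, ← map_sub]
  congr 1
  simp only [map_sub, Finset.sum_sub_distrib, smul_sub, hopt, smul_apply, sum_apply]
  abel

theorem norm_daveQNStep_sub_le (hc : 0 ≤ c) (hB : IsUnit (c • ∑ i, B i))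
    (hopt : c • ∑ i, g i xstar = 0) {H : ι → E →L[ℝ] E} {r : ι → ℝ}
    (hr : ∀ i, ‖g i (z i) - g i xstar - H i (z i - xstar)‖ ≤ r i) :
    ‖daveQNStep c B g z - xstar‖ ≤
      ‖Ring.inverse (c • ∑ i, B i)‖ * (c * ∑ i, (r i + ‖(B i - H i) (z i - xstar)‖)) := by
  have hterm : ∀ i, ‖B i (z i - xstar) - (g i (z i) - g i xstar)‖ ≤
      r i + ‖(B i - H i) (z i - xstar)‖ := fun i => by
    have hsplit : B i (z i - xstar) - (g i (z i) - g i xstar) =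
        (B i - H i) (z i - xstar) - (g i (z i) - g i xstar - H i (z i - xstar)) := by
      simp only [sub_apply]; abel
    rw [hsplit, add_comm]
    exact (norm_sub_le _ _).trans (by gcongr; exact hr i)
  rw [daveQNStep_sub hB hopt]
  refine (ContinuousLinearMap.le_opNorm _ _).trans ?_
  gcongr
  rw [norm_smul, Real.norm_of_nonneg hc]
  gcongr
  exact (norm_sum_le _ _).trans (Finset.sum_le_sum fun i _ => hterm i)

end DAveQN

theorem dave_qn_iterate_bound_general (p n : ℕ)
    (f : Fin n → EuclideanSpace ℝ (Fin p) → ℝ) (Lt : ℝ) (hLt : 0 < Lt)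
    (hf : ∀ i, ContDiff ℝ 2 (f i))
    (hLip : ∀ i, ∀ x y : EuclideanSpace ℝ (Fin p),
      ‖fderiv ℝ (gradient (f i)) x - fderiv ℝ (gradient (f i)) y‖ ≤ Lt * ‖x - y‖)
    (xstar : EuclideanSpace ℝ (Fin p))
    (hopt : (1 / (n : ℝ)) • ∑ i, gradient (f i) xstar = 0)
    (z : Fin n → EuclideanSpace ℝ (Fin p))
    (B : Fin n → (EuclideanSpace ℝ (Fin p) →L[ℝ] EuclideanSpace ℝ (Fin p)))
    (hBunit : IsUnit ((1 / (n : ℝ)) • ∑ i, B i))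
    (x : EuclideanSpace ℝ (Fin p))
    (hx : x = (Ring.inverse ((1 / (n : ℝ)) • ∑ i, B i))
      ((1 / (n : ℝ)) • ∑ i, (B i) (z i) - (1 / (n : ℝ)) • ∑ i, gradient (f i) (z i))) :
    ‖x - xstar‖
      ≤ (Lt * ‖Ring.inverse ((1 / (n : ℝ)) • ∑ i, B i)‖ / n) * ∑ i, ‖z i - xstar‖ ^ 2
        + (‖Ring.inverse ((1 / (n : ℝ)) • ∑ i, B i)‖ / n) *
            ∑ i, ‖(B i - fderiv ℝ (gradient (f i)) xstar) (z i - xstar)‖ := by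
  have htaylor : ∀ i, ‖gradient (f i) (z i) - gradient (f i) xstar -
      fderiv ℝ (gradient (f i)) xstar (z i - xstar)‖ ≤ Lt * ‖z i - xstar‖ ^ 2 := fun i =>
    norm_sub_sub_fderiv_le_of_norm_fderiv_sub_le (hf i).differentiable_gradient hLt.le _ _
      fun w => hLip i w xstar
  have hbound := norm_daveQNStep_sub_le (g := fun i => gradient (f i)) (by positivity) hBunit
    hopt htaylor
  rw [hx]
  refine hbound.trans_eq ?_
  rw [Finset.sum_add_distrib, ← Finset.mul_sum]
  ring

/-- Bound for the DAve-QN master iterate: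
`‖x − x*‖ ≤ (L̃Γ/n)∑‖zᵢ − x*‖² + (Γ/n)∑‖(Bᵢ − Hᵢ)(zᵢ − x*)‖` where
`x = B⁻¹((1/n)∑Bᵢzᵢ − (1/n)∑∇fᵢ(zᵢ))`, `B = (1/n)∑Bᵢ`, `Γ = ‖B⁻¹‖`,
`Hᵢ = ∇²fᵢ(x*)` and `(1/n)∑∇fᵢ(x*) = 0`. -/
theorem dave_qn_iterate_bound (p n : ℕ) (hn : 0 < n)
    (f : Fin n → EuclideanSpace ℝ (Fin p) → ℝ) (μ Lt : ℝ) (hμ : 0 < μ) (hLt : 0 < Lt)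
    (hf : ∀ i, ContDiff ℝ 2 (f i))
    (hsc : ∀ i, ∀ x v : EuclideanSpace ℝ (Fin p),
      μ * ‖v‖ ^ 2 ≤ ⟪fderiv ℝ (gradient (f i)) x v, v⟫)
    (hLip : ∀ i, ∀ x y : EuclideanSpace ℝ (Fin p),
      ‖fderiv ℝ (gradient (f i)) x - fderiv ℝ (gradient (f i)) y‖ ≤ Lt * ‖x - y‖)
    (xstar : EuclideanSpace ℝ (Fin p))
    (hopt : (1 / (n : ℝ)) • ∑ i, gradient (f i) xstar = 0)
    (z : Fin n → EuclideanSpace ℝ (Fin p))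
    (B : Fin n → (EuclideanSpace ℝ (Fin p) →L[ℝ] EuclideanSpace ℝ (Fin p)))
    (hBsym : ∀ i, IsSelfAdjoint (B i))
    (hBunit : IsUnit ((1 / (n : ℝ)) • ∑ i, B i))
    (x : EuclideanSpace ℝ (Fin p))
    (hx : x = (Ring.inverse ((1 / (n : ℝ)) • ∑ i, B i))
      ((1 / (n : ℝ)) • ∑ i, (B i) (z i) - (1 / (n : ℝ)) • ∑ i, gradient (f i) (z i))) :
    ‖x - xstar‖
      ≤ (Lt * ‖Ring.inverse ((1 / (n : ℝ)) • ∑ i, B i)‖ / n) * ∑ i, ‖z i - xstar‖ ^ 2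
        + (‖Ring.inverse ((1 / (n : ℝ)) • ∑ i, B i)‖ / n) *
            ∑ i, ‖(B i - fderiv ℝ (gradient (f i)) xstar) (z i - xstar)‖ :=
  dave_qn_iterate_bound_general p n f Lt hLt hf hLip xstar hopt z B hBunit x hx
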